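/- arXiv:1605.00723 — 5 statements merged into one kernel-verified Lean document; each statement's English description precedes it below -/
import Mathlib

section
/- Let F be a CNF formula, C a clause, and x a literal with x ∈ C. If for every clause D ∈ F containing the negation of x it holds that F logically implies the clause C ∪ (D \ {¬x}), then the addition of C to F is sat-preserving; that is, if F is satisfiable then F ∪ {C} is satisfiable. -/
/-- The negation of a literal. -/
def negLit {V : Type*} (l : V × Bool) : V × Bool := (l.1, !l.2)

/-- An assignment satisfies a literal. -/
def SatLit {V : Type*} (τ : V → Bool) (l : V × Bool) : Prop := τ l.1 = l.2

/-- An assignment satisfies a clause iff it satisfies some literal of it. -/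
def SatClause {V : Type*} (τ : V → Bool) (C : Finset (V × Bool)) : Prop :=
  ∃ l ∈ C, SatLit τ l

/-- An assignment satisfies a formula iff it satisfies every clause of it. -/
def SatFormula {V : Type*} (τ : V → Bool) (F : Finset (Finset (V × Bool))) : Prop :=
  ∀ C ∈ F, SatClause τ C

/-- A formula is satisfiable. -/
def Satisfiable {V : Type*} (F : Finset (Finset (V × Bool))) : Prop :=
  ∃ τ, SatFormula τ F

/-- Logical implication of a clause by a formula. -/
def Implies {V : Type*} (F : Finset (Finset (V × Bool))) (C : Finset (V × Bool)) : Prop :=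
  ∀ τ, SatFormula τ F → SatClause τ C

/-- If for every clause `D ∈ F` containing `¬x` the formula `F` logically implies
`C ∪ (D \ {¬x})`, then adding `C` to `F` is sat-preserving. -/
theorem genrat_sat_preserving {V : Type*} [DecidableEq V]
    (F : Finset (Finset (V × Bool))) (C : Finset (V × Bool)) (x : V × Bool)
    (hx : x ∈ C)
    (h : ∀ D ∈ F, negLit x ∈ D → Implies F (C ∪ (D \ {negLit x})))
    (hsat : Satisfiable F) :
    Satisfiable (insert C F) := by
  obtain ⟨τ, hτ⟩ := hsat
  by_cases hC : SatClause τ C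
  · exact ⟨τ, fun D hD => by
      rcases Finset.mem_insert.mp hD with rfl | hD
      · exact hC
      · exact hτ D hD⟩
  · -- flip τ at x.1
    have hτx : τ x.1 ≠ x.2 := fun hxx => hC ⟨x, hx, hxx⟩
    set τ' : V → Bool := fun v => if v = x.1 then x.2 else τ v with hτ'
    have hsx : SatLit τ' x := by simp [SatLit, hτ']
    have keep : ∀ l : V × Bool, l.1 ≠ x.1 → SatLit τ l → SatLit τ' l := by
      intro l hl hsl
      simpa [SatLit, hτ', hl] using hsl
    refine ⟨τ', fun D hD => ?_⟩
    rcases Finset.mem_insert.mp hD with rfl | hD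
    · exact ⟨x, hx, hsx⟩
    · by_cases hneg : negLit x ∈ D
      · obtain ⟨l, hl, hsl⟩ := h D hD hneg τ hτ
        rcases Finset.mem_union.mp hl with hlC | hlD
        · exact absurd ⟨l, hlC, hsl⟩ hC
        · obtain ⟨hlD, hlne⟩ := Finset.mem_sdiff.mp hlD
          refine ⟨l, hlD, keep l ?_ hsl⟩
          intro heq
          apply hlne
          have : l.2 = !x.2 := by
            cases hb : x.2 <;> cases hb' : l.2 <;>
              simp_all [SatLit, heq, negLit]
          simp [Finset.mem_singleton, negLit, Prod.ext_iff, heq, this]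
      · obtain ⟨l, hl, hsl⟩ := hτ D hD
        refine ⟨l, hl, keep l ?_ hsl⟩
        intro heq
        apply hneg
        have : l.2 = !x.2 := by
          cases hb : x.2 <;> cases hb' : l.2 <;>
            simp_all [SatLit, heq, negLit]
        have : l = negLit x := by simp [negLit, Prod.ext_iff, heq, this]
        rwa [this] at hl
end

section
/- If unit propagation derives a conflict from F ∧ ¬C, then F logically implies C; in particular (taking C to be the empty clause), if unit propagation derives a conflict from F then F is unsatisfiable. Consequently every asymmetric tautology with respect to F is logically implied by F. -/
/-- A literal `l` is unit-derivable from `F` if some clause `D ∈ F` contains `l`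
and the negation of every other literal of `D` is unit-derivable from `F`. -/
inductive UnitDeriv {V : Type*} : Finset (Finset (V × Bool)) → (V × Bool) → Prop
  | intro (F : Finset (Finset (V × Bool))) (l : V × Bool) (D : Finset (V × Bool))
      (hD : D ∈ F) (hl : l ∈ D)
      (h : ∀ m ∈ D, m ≠ l → UnitDeriv F (negLit m)) : UnitDeriv F l

/-- Unit propagation derives a conflict from `F` (written `F ⊢₁ ⊥`): the empty
clause is in `F`, or some literal and its negation are both unit-derivable. -/
def UPConflict {V : Type*} (F : Finset (Finset (V × Bool))) : Prop :=
  (∅ : Finset (V × Bool)) ∈ F ∨ ∃ l, UnitDeriv F l ∧ UnitDeriv F (negLit l)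

/-- The formula `¬C`: one unit clause negating each literal of the clause `C`. -/
def negCNF {V : Type*} [DecidableEq V] (C : Finset (V × Bool)) :
    Finset (Finset (V × Bool)) :=
  C.image (fun l => {negLit l})

lemma unitDeriv_sat {V : Type*} {F : Finset (Finset (V × Bool))} {τ : V → Bool}
    (hF : SatFormula τ F) {l : V × Bool} (h : UnitDeriv F l) : SatLit τ l := by
  induction h with
  | intro l D hD hl hrec ih =>
    obtain ⟨m, hm, hsm⟩ := hF D hD
    by_cases hml : m = l
    · exact hml ▸ hsm
    · have := ih m hm hml
      simp [SatLit, negLit] at this hsm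
      rw [hsm] at this
      simp at this

lemma upConflict_unsat {V : Type*} {F : Finset (Finset (V × Bool))} {τ : V → Bool}
    (hF : SatFormula τ F) (h : UPConflict F) : False := by
  rcases h with h | ⟨l, h1, h2⟩
  · obtain ⟨m, hm, _⟩ := hF ∅ h
    simp at hm
  · have s1 := unitDeriv_sat hF h1
    have s2 := unitDeriv_sat hF h2
    simp [SatLit, negLit] at s1 s2
    rw [s1] at s2; simp at s2

/-- If unit propagation derives a conflict from `F ∧ ¬C` then `F ⊨ C`; in
particular, a unit-propagation conflict on `F` itself shows `F` unsatisfiable.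
Consequently every asymmetric tautology w.r.t. `F` (a clause `C` with
`F ∧ ¬C ⊢₁ ⊥`) is logically implied by `F`. -/
theorem up_conflict_implies {V : Type*} [DecidableEq V]
    (F : Finset (Finset (V × Bool))) :
    (∀ C : Finset (V × Bool), UPConflict (F ∪ negCNF C) → Implies F C) ∧
    (UPConflict F → ¬ Satisfiable F) := by
  constructor
  · intro C hC τ hτ
    by_contra hnot
    have hτ' : SatFormula τ (F ∪ negCNF C) := by
      intro D hD
      rcases Finset.mem_union.mp hD with h | h
      · exact hτ D h
      · simp only [negCNF, Finset.mem_image] at h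
        obtain ⟨l, hl, rfl⟩ := h
        refine ⟨negLit l, Finset.mem_singleton_self _, ?_⟩
        have : ¬ SatLit τ l := fun hs => hnot ⟨l, hl, hs⟩
        obtain ⟨x, b⟩ := l
        simp [SatLit, negLit] at this ⊢
        cases b <;> simp_all
    exact upConflict_unsat hτ' hC
  · rintro h ⟨τ, hτ⟩
    exact upConflict_unsat hτ h
end

section
/- Every non-empty asymmetric tautology C with respect to a CNF formula F has RAT on any literal x ∈ C with respect to F. -/
theorem unitDeriv_mono {V : Type*} {F G : Finset (Finset (V × Bool))} (hFG : F ⊆ G)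
    {l : V × Bool} (h : UnitDeriv F l) : UnitDeriv G l := by
  induction h with
  | intro l D hD hl h ih =>
    exact .intro G l D (hFG hD) hl (fun m hm hne => ih m hm hne)

theorem upConflict_mono {V : Type*} {F G : Finset (Finset (V × Bool))} (hFG : F ⊆ G)
    (h : UPConflict F) : UPConflict G := by
  rcases h with h | ⟨l, h1, h2⟩
  · exact Or.inl (hFG h)
  · exact Or.inr ⟨l, unitDeriv_mono hFG h1, unitDeriv_mono hFG h2⟩

/-- Every non-empty asymmetric tautology `C` w.r.t. `F` has RAT on any
literal `x ∈ C` w.r.t. `F`. -/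
theorem asymmetric_tautology_RAT {V : Type*} [DecidableEq V]
    (F : Finset (Finset (V × Bool))) (C : Finset (V × Bool))
    (hC : C ≠ ∅) (hAT : UPConflict (F ∪ negCNF C)) :
    ∀ x ∈ C, ∀ D ∈ F, negLit x ∈ D →
      UPConflict (F ∪ negCNF (C ∪ (D \ {negLit x}))) := by
  intro x hx D hD hnx
  refine upConflict_mono ?_ hAT
  exact Finset.union_subset_union (le_refl F)
    (Finset.image_subset_image (Finset.subset_union_left))
end

section
/- Extension rule soundness: let F be a CNF formula, let x be a variable occurring in no clause of F, and let a and b be literals whose underlying variable is not x. Then F is satisfiable if and only if the formula F ∪ {(x ∨ ¬a ∨ ¬b), (¬x ∨ a), (¬x ∨ b)} obtained by adding the extended resolution clauses defining x := a ∧ b is satisfiable. -/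
/-- Extension rule soundness: if the variable `x` occurs in no clause of `F` and
`a`, `b` are literals whose underlying variable is not `x`, then `F` is
satisfiable iff `F ∪ {(x ∨ ¬a ∨ ¬b), (¬x ∨ a), (¬x ∨ b)}` is satisfiable. -/
theorem extension_rule_sound {V : Type*} [DecidableEq V]
    (F : Finset (Finset (V × Bool))) (x : V) (a b : V × Bool)
    (hx : ∀ C ∈ F, ∀ l ∈ C, l.1 ≠ x)
    (ha : a.1 ≠ x) (hb : b.1 ≠ x) :
    Satisfiable F ↔
      Satisfiable (F ∪ {({(x, true), negLit a, negLit b} : Finset (V × Bool)),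
                        {(x, false), a}, {(x, false), b}}) := by

  constructor
  · rintro ⟨τ, hτ⟩
    set σ : V → Bool := fun v => if v = x then ((τ a.1 == a.2) && (τ b.1 == b.2)) else τ v with hσ
    have hσx : σ x = ((τ a.1 == a.2) && (τ b.1 == b.2)) := by simp [hσ]
    have hσa : σ a.1 = τ a.1 := by simp [hσ, ha]
    have hσb : σ b.1 = τ b.1 := by simp [hσ, hb]
    refine ⟨σ, fun C hC => ?_⟩
    simp only [Finset.mem_union, Finset.mem_insert, Finset.mem_singleton] at hC
    rcases hC with hC | hC | hC | hC
    · obtain ⟨l, hl, hsat⟩ := hτ C hC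
      exact ⟨l, hl, by simpa [SatLit, hσ, hx C hC l hl] using hsat⟩
    · subst hC
      by_cases h : (τ a.1 == a.2) && (τ b.1 == b.2)
      · exact ⟨(x, true), by simp, by simp [SatLit, hσx, h]⟩
      · rw [Bool.and_eq_true, beq_iff_eq, beq_iff_eq] at h
        push_neg at h
        by_cases h2 : τ a.1 = a.2
        · exact ⟨negLit b, by simp, by
            simp [SatLit, negLit, hσb]
            cases hb2 : τ b.1 <;> cases hb3 : b.2 <;> simp_all⟩
        · exact ⟨negLit a, by simp, by
            simp [SatLit, negLit, hσa]
            cases hb2 : τ a.1 <;> cases hb3 : a.2 <;> simp_all⟩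
    · subst hC
      by_cases h : (τ a.1 == a.2) && (τ b.1 == b.2)
      · rw [Bool.and_eq_true, beq_iff_eq, beq_iff_eq] at h
        exact ⟨a, by simp, by simp [SatLit, hσa, h.1]⟩
      · exact ⟨(x, false), by simp, by simp [SatLit, hσx]; simpa using h⟩
    · subst hC
      by_cases h : (τ a.1 == a.2) && (τ b.1 == b.2)
      · rw [Bool.and_eq_true, beq_iff_eq, beq_iff_eq] at h
        exact ⟨b, by simp, by simp [SatLit, hσb, h.2]⟩
      · exact ⟨(x, false), by simp, by simp [SatLit, hσx]; simpa using h⟩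
  · rintro ⟨τ, hτ⟩
    exact ⟨τ, fun C hC => hτ C (Finset.mem_union_left _ hC)⟩
end

section
/- Soundness of DRAT refutations: let F be a CNF formula and F = F₀, F₁, …, F_k a finite sequence of formulas such that each F_{i+1} is obtained from F_i either (1) by deleting one clause of F_i, or (2) by adding a clause C that has RAT on some literal x ∈ C with respect to F_i, or (3) by adding the empty clause, provided unit propagation derives a conflict from F_i. If the empty clause belongs to F_k, then F is unsatisfiable. -/
lemma satLit_negLit {V : Type*} (τ : V → Bool) (l : V × Bool) :
    SatLit τ (negLit l) ↔ ¬ SatLit τ l := by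
  cases l with
  | mk v b => cases b <;> simp [SatLit, negLit]

lemma unitDeriv_sound {V : Type*} {τ : V → Bool} {F : Finset (Finset (V × Bool))}
    {l : V × Bool} (h : UnitDeriv F l) : SatFormula τ F → SatLit τ l := by
  induction h with
  | intro l D hD hl _ ih =>
    intro hF
    obtain ⟨m, hm, hsat⟩ := hF D hD
    by_cases hml : m = l
    · exact hml ▸ hsat
    · exact absurd hsat ((satLit_negLit τ m).mp (ih m hm hml hF))

lemma upconflict_unsat {V : Type*} {F : Finset (Finset (V × Bool))}
    (h : UPConflict F) (τ : V → Bool) (hF : SatFormula τ F) : False := by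
  rcases h with h | ⟨l, h1, h2⟩
  · obtain ⟨m, hm, _⟩ := hF ∅ h; simp at hm
  · exact (satLit_negLit τ l).mp (unitDeriv_sound h2 hF) (unitDeriv_sound h1 hF)

lemma satFormula_negCNF {V : Type*} [DecidableEq V] {τ : V → Bool}
    {C : Finset (V × Bool)} (h : ∀ l ∈ C, ¬ SatLit τ l) :
    SatFormula τ (negCNF C) := by
  intro D hD
  simp only [negCNF, Finset.mem_image] at hD
  obtain ⟨l, hl, rfl⟩ := hD
  exact ⟨negLit l, Finset.mem_singleton_self _, (satLit_negLit τ l).mpr (h l hl)⟩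

lemma rat_preserve {V : Type*} [DecidableEq V] {F : Finset (Finset (V × Bool))}
    {C : Finset (V × Bool)} {x : V × Bool} (hx : x ∈ C)
    (hrat : ∀ D ∈ F, negLit x ∈ D → UPConflict (F ∪ negCNF (C ∪ (D \ {negLit x}))))
    (hs : Satisfiable F) : Satisfiable (insert C F) := by
  obtain ⟨τ, hτ⟩ := hs
  by_cases hC : SatClause τ C
  · exact ⟨τ, fun D hD => by
      rcases Finset.mem_insert.mp hD with rfl | h
      exacts [hC, hτ D h]⟩
  · have hC' : ∀ l ∈ C, ¬ SatLit τ l := by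
      intro l hl hsat; exact hC ⟨l, hl, hsat⟩
    refine ⟨Function.update τ x.1 x.2, ?_⟩
    have hx' : SatLit (Function.update τ x.1 x.2) x := by
      simp [SatLit]
    have key : ∀ D ∈ F, ∃ m ∈ D, m ≠ negLit x ∧ SatLit τ m := by
      intro D hD
      by_cases hneg : negLit x ∈ D
      · by_contra hcon
        push_neg at hcon
        apply upconflict_unsat (hrat D hD hneg) τ
        intro E hE
        rcases Finset.mem_union.mp hE with h | h
        · exact hτ E h
        · refine satFormula_negCNF ?_ E h
          intro l hl
          rcases Finset.mem_union.mp hl with h' | h'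
          · exact hC' l h'
          · obtain ⟨hlD, hlne⟩ := Finset.mem_sdiff.mp h'
            intro hsat
            exact (hcon l hlD (by simpa using hlne)) hsat
      · obtain ⟨m, hm, hsat⟩ := hτ D hD
        exact ⟨m, hm, fun h => hneg (h ▸ hm), hsat⟩
    intro D hD
    rcases Finset.mem_insert.mp hD with rfl | hDF
    · exact ⟨x, hx, hx'⟩
    · obtain ⟨m, hm, hmne, hsat⟩ := key D hDF
      by_cases hm1 : m.1 = x.1
      · have : m = x := by
          cases m with
          | mk v b =>
            cases x with
            | mk w c =>
              simp only at hm1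
              subst hm1
              simp only [negLit, ne_eq, Prod.mk.injEq, true_and] at hmne
              cases b <;> cases c <;> simp_all
        exact ⟨x, this ▸ hm, hx'⟩
      · refine ⟨m, hm, ?_⟩
        simpa [SatLit, Function.update_of_ne hm1] using hsat

lemma step_preserve {V : Type*} [DecidableEq V]
    {F G : Finset (Finset (V × Bool))}
    (h : (∃ C ∈ F, G = F.erase C) ∨
      (∃ C : Finset (V × Bool), ∃ x ∈ C,
        (∀ D ∈ F, negLit x ∈ D →
          UPConflict (F ∪ negCNF (C ∪ (D \ {negLit x})))) ∧
        G = insert C F) ∨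
      (UPConflict F ∧ G = insert (∅ : Finset (V × Bool)) F))
    (hs : Satisfiable F) : Satisfiable G := by
  rcases h with ⟨C, _, rfl⟩ | ⟨C, x, hx, hrat, rfl⟩ | ⟨hup, rfl⟩
  · obtain ⟨τ, hτ⟩ := hs
    exact ⟨τ, fun D hD => hτ D (Finset.mem_of_mem_erase hD)⟩
  · exact rat_preserve hx hrat hs
  · obtain ⟨τ, hτ⟩ := hs
    exact absurd (upconflict_unsat hup τ hτ) (by simp)

/-- Soundness of DRAT refutations: if a sequence of formulas starts at `F`,
each step deletes a clause, adds a RAT clause, or adds the empty clause after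
a unit-propagation conflict, and the final formula contains the empty clause,
then `F` is unsatisfiable. -/
theorem drat_soundness {V : Type*} [DecidableEq V]
    (k : ℕ) (Fs : ℕ → Finset (Finset (V × Bool)))
    (hstep : ∀ i < k,
      (∃ C ∈ Fs i, Fs (i + 1) = (Fs i).erase C) ∨
      (∃ C : Finset (V × Bool), ∃ x ∈ C,
        (∀ D ∈ Fs i, negLit x ∈ D →
          UPConflict (Fs i ∪ negCNF (C ∪ (D \ {negLit x})))) ∧
        Fs (i + 1) = insert C (Fs i)) ∨
      (UPConflict (Fs i) ∧ Fs (i + 1) = insert (∅ : Finset (V × Bool)) (Fs i)))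
    (hempty : (∅ : Finset (V × Bool)) ∈ Fs k) :
    ¬ Satisfiable (Fs 0) := by
  intro hs
  have hall : ∀ i ≤ k, Satisfiable (Fs i) := by
    intro i
    induction i with
    | zero => exact fun _ => hs
    | succ n ih =>
      intro hn
      exact step_preserve (hstep n (by omega)) (ih (by omega))
  obtain ⟨τ, hτ⟩ := hall k le_rfl
  obtain ⟨m, hm, _⟩ := hτ ∅ hempty
  simp at hm
end
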